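/- Let N be an even positive integer, x ∈ Π[N] a real-valued signal, and K ∈ ℤ such that x is symmetric about K, i.e. x[K+j] = x[K−j] for all j ∈ ℤ. Then h = H(x) is antisymmetric about K, i.e. h[K+j] = −h[K−j] for all j ∈ ℤ; in particular h[K] = 0. -/

import Mathlib

open MeasureTheory

namespace WP

/-- The root of unity ω = e^{2πi/N}. -/
noncomputable def ww (N : ℕ) : ℂ := Complex.exp (2 * Real.pi * Complex.I / N)

/-- DFT of a signal `x ∈ Π[N]`: x̂[n] = Σ_{k=0}^{N−1} ω^{−kn} x[k]. -/
noncomputable def dft (N : ℕ) (x : ℤ → ℂ) (n : ℤ) : ℂ :=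
  ∑ k ∈ Finset.range N, ww N ^ (-((k : ℤ) * n)) * x k

/-- Inner product on `Π[N]`. -/
noncomputable def inner1 (N : ℕ) (x y : ℤ → ℂ) : ℂ :=
  ∑ k ∈ Finset.range N, x k * (starRingEnd ℂ) (y k)

/-- The discrete periodic Hilbert transform, defined via the DFT:
    Ĥ(x)[n] = −i·x̂[n] for 0<n<N/2, i·x̂[n] for N/2<n<N, 0 at n=0 and n=N/2. -/
noncomputable def hilbertT (N : ℕ) (x : ℤ → ℂ) (k : ℤ) : ℂ :=
  (N : ℂ)⁻¹ * ∑ n ∈ Finset.range N,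
    (if 0 < n ∧ n < N / 2 then -Complex.I else if N / 2 < n ∧ n < N then Complex.I else 0) *
      dft N x n * ww N ^ ((k * (n : ℤ)))

/-- The complementary-WP operator `C`, defined via the DFT:
    Ĉ(x)[n] = −i·x̂[n] for 0<n<N/2, i·x̂[n] for N/2<n<N, x̂[0] at 0, x̂[N/2] at N/2. -/
noncomputable def cwpT (N : ℕ) (x : ℤ → ℂ) (k : ℤ) : ℂ :=
  (N : ℂ)⁻¹ * ∑ n ∈ Finset.range N,
    (if n = 0 ∨ n = N / 2 then 1 else if n < N / 2 then -Complex.I else Complex.I) *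
      dft N x n * ww N ^ ((k * (n : ℤ)))

/-- The order-p B-spline b^p(t). -/
noncomputable def bspline (p : ℕ) (t : ℝ) : ℝ :=
  (1 / (Nat.factorial (p - 1) : ℝ)) *
    ∑ k ∈ Finset.range (p + 1),
      (-1 : ℝ) ^ k * (p.choose k : ℝ) * max (t + (p : ℝ) / 2 - (k : ℝ)) 0 ^ (p - 1)

/-- u^p[n] = Σ_{k=−N/2}^{N/2−1} ω^{−kn} b^p(k). -/
noncomputable def uSeq (N p : ℕ) (n : ℤ) : ℂ :=
  ∑ k ∈ Finset.range N,
    ww N ^ (-(((k : ℤ) - (N : ℤ) / 2) * n)) * (bspline p ((k : ℝ) - (N : ℝ) / 2) : ℂ)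

/-- v^p[n] = e^{−πin/N} Σ_{k=−N/2}^{N/2−1} ω^{−kn} b^p(k+1/2). -/
noncomputable def vSeq (N p : ℕ) (n : ℤ) : ℂ :=
  Complex.exp (-Real.pi * Complex.I * n / N) *
    ∑ k ∈ Finset.range N,
      ww N ^ (-(((k : ℤ) - (N : ℤ) / 2) * n)) *
        (bspline p ((k : ℝ) - (N : ℝ) / 2 + 1 / 2) : ℂ)

/-- The span-two discrete-time B-spline b_{[1]}^p ∈ Π[N]:
    the N-periodic signal with b_{[1]}^p[k] = b^p(k/2)/2 for −N/2 ≤ k ≤ N/2−1. -/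
noncomputable def bs1 (N p : ℕ) (k : ℤ) : ℂ :=
  ((bspline p ((((k + (N : ℤ) / 2) % (N : ℤ) - (N : ℤ) / 2 : ℤ) : ℝ) / 2) : ℝ) : ℂ) / 2

/-- Its DFT b̂_{[1]}^p[n] = Σ_{k=−N/2}^{N/2−1} ω^{−kn} b_{[1]}^p[k]. -/
noncomputable def bhat1 (N p : ℕ) (n : ℤ) : ℂ :=
  ∑ k ∈ Finset.range N,
    ww N ^ (-(((k : ℤ) - (N : ℤ) / 2) * n)) * bs1 N p ((k : ℤ) - (N : ℤ) / 2)

/-- Υ^p[n] = (u^p[2n]² + v^p[2n]²)/4. -/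
noncomputable def upsilon (N p : ℕ) (n : ℤ) : ℂ :=
  (uSeq N p (2 * n) ^ 2 + vSeq N p (2 * n) ^ 2) / 4

/-- β[n] = b̂_{[1]}^p[n] / √(Υ^p[n]). -/
noncomputable def betaS (N p : ℕ) (n : ℤ) : ℂ := bhat1 N p n / upsilon N p n ^ ((1 : ℂ) / 2)

/-- α[n] = ω^n · β[n+N/2]. -/
noncomputable def alphaS (N p : ℕ) (n : ℤ) : ℂ := ww N ^ n * betaS N p (n + (N : ℤ) / 2)

/-- The first-level wavelet packets ψ_{[1],λ}^p, λ = 0,1, defined via their DFTs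
    ψ̂_{[1],0}^p[n] = β[n] and ψ̂_{[1],1}^p[n] = α[n]. -/
noncomputable def psi1 (N p lam : ℕ) (k : ℤ) : ℂ :=
  (N : ℂ)⁻¹ * ∑ n ∈ Finset.range N,
    (if lam = 0 then betaS N p n else alphaS N p n) * ww N ^ ((k * (n : ℤ)))

/-!
Reindex the inverse DFT by n ↦ −n (mod N). For even N the Hilbert multiplier is odd under this
reflection, and symmetry of x about K gives x̂[−n] = ω^{2Kn} x̂[n]; the phase ω^{2Kn} turns
ω^{−(K+j)n} into ω^{(K−j)n}, so H(x)[K+j] = −H(x)[K−j].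
-/

open Finset

section PeriodicSum

variable {M : Type*} [AddCommMonoid M] {N : ℕ} {f : ℤ → M}

theorem _root_.Function.Periodic.sum_range_add_one (hf : Function.Periodic f N) :
    ∑ k ∈ range N, f (k + 1) = ∑ k ∈ range N, f k := by
  cases N with
  | zero => simp
  | succ n =>
    rw [sum_range_succ, sum_range_succ' (fun k : ℕ => f k)]
    have hwrap : f (n + 1) = f 0 := by simpa using hf 0
    push_cast
    rw [hwrap]

theorem _root_.Function.Periodic.sum_range_add (hf : Function.Periodic f N) (c : ℤ) :
    ∑ k ∈ range N, f (k + c) = ∑ k ∈ range N, f k := by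
  induction c using Int.induction_on with
  | zero => simp
  | succ i ih =>
    rw [← ih, ← (hf.add_const (i : ℤ)).sum_range_add_one]
    exact sum_congr rfl fun k _ => congrArg f (by ring)
  | pred i ih =>
    rw [← ih, ← (hf.add_const (-(i : ℤ) - 1)).sum_range_add_one]
    exact sum_congr rfl fun k _ => congrArg f (by ring)

theorem _root_.Function.Periodic.sum_range_sub (hf : Function.Periodic f N) (c : ℤ) :
    ∑ k ∈ range N, f (c - k) = ∑ k ∈ range N, f k := by
  rw [← sum_range_reflect, ← hf.sum_range_add (c - N + 1)]
  refine sum_congr rfl fun k hk => ?_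
  have hkN : k < N := mem_range.mp hk
  rw [Nat.cast_sub (by omega), Nat.cast_sub (by omega)]
  congr 1
  push_cast
  ring

end PeriodicSum

theorem _root_.Finset.sum_range_sub_mod {M : Type*} [AddCommMonoid M] (N : ℕ) (f : ℕ → M) :
    ∑ n ∈ range N, f ((N - n) % N) = ∑ n ∈ range N, f n := by
  simp only [sum_range, ← Fin.val_neg']
  exact Fintype.sum_equiv (Equiv.neg (Fin N)) _ _ fun _ => rfl

theorem natCast_sub_mod_modEq_neg {N n : ℕ} (hn : n < N) :
    (((N - n) % N : ℕ) : ℤ) ≡ -n [ZMOD N] := by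
  rw [Int.natCast_mod, Nat.cast_sub hn.le, sub_eq_add_neg]
  exact (Int.mod_modEq _ _).trans Int.add_modEq_left

theorem ww_ne_zero (N : ℕ) : ww N ≠ 0 := Complex.exp_ne_zero _

theorem ww_zpow_natCast_self (N : ℕ) : ww N ^ (N : ℤ) = 1 := by
  rcases eq_or_ne N 0 with rfl | hN
  · simp
  · rw [zpow_natCast]
    exact (Complex.isPrimitiveRoot_exp N hN).pow_eq_one

theorem ww_zpow_emod (N : ℕ) (a : ℤ) : ww N ^ (a % N) = ww N ^ a := by
  conv_rhs => rw [← Int.emod_add_mul_ediv a N, zpow_add₀ (ww_ne_zero N), zpow_mul,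
    ww_zpow_natCast_self, one_zpow, mul_one]

theorem ww_zpow_eq_of_modEq {N : ℕ} {a b : ℤ} (h : a ≡ b [ZMOD N]) : ww N ^ a = ww N ^ b := by
  rw [← ww_zpow_emod, h, ww_zpow_emod]

theorem dft_eq_of_modEq (N : ℕ) (x : ℤ → ℂ) {n m : ℤ} (h : n ≡ m [ZMOD N]) :
    dft N x n = dft N x m :=
  sum_congr rfl fun k _ => by rw [ww_zpow_eq_of_modEq (h.mul_left k).neg]

theorem dft_neg_of_symm {N : ℕ} {x : ℤ → ℂ} (hper : ∀ k : ℤ, x (k + N) = x k) {K : ℤ}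
    (hsym : ∀ j : ℤ, x (K + j) = x (K - j)) (n : ℤ) :
    dft N x (-n) = ww N ^ (2 * K * n) * dft N x n := by
  have hperiodic : Function.Periodic (fun k : ℤ => ww N ^ (-(k * n)) * x k) N := fun k => by
    simp only [hper]
    rw [ww_zpow_eq_of_modEq (Int.add_modEq_right.mul_right n).neg]
  conv_rhs => rw [dft, ← hperiodic.sum_range_sub (2 * K)]
  rw [dft, mul_sum]
  refine sum_congr rfl fun k _ => ?_
  have hx : x (2 * K - k) = x k := by simpa [two_mul, add_sub_assoc] using hsym (K - k)
  rw [hx, ← mul_assoc, ← zpow_add₀ (ww_ne_zero N)]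
  ring_nf

def hilbertMultiplier (N n : ℕ) : ℂ :=
  if 0 < n ∧ n < N / 2 then -Complex.I else if N / 2 < n ∧ n < N then Complex.I else 0

theorem hilbertT_eq_sum_hilbertMultiplier (N : ℕ) (x : ℤ → ℂ) (k : ℤ) :
    hilbertT N x k =
      (N : ℂ)⁻¹ * ∑ n ∈ range N, hilbertMultiplier N n * dft N x n * ww N ^ (k * n) :=
  rfl

theorem hilbertMultiplier_sub_mod {N : ℕ} (hN : Even N) (n : ℕ) :
    hilbertMultiplier N ((N - n) % N) = -hilbertMultiplier N n := by
  obtain ⟨m, rfl⟩ := hN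
  unfold hilbertMultiplier
  rcases Nat.eq_zero_or_pos n with rfl | hn₀
  · simp
  rcases Nat.lt_or_ge n (m + m) with hn | hn
  · rw [Nat.mod_eq_of_lt (by omega)]
    split_ifs <;> first | omega | simp
  · rw [Nat.sub_eq_zero_of_le hn, Nat.zero_mod]
    split_ifs <;> first | omega | simp

theorem hilbertT_add_eq_neg_sub {N : ℕ} (hN : Even N) {x : ℤ → ℂ}
    (hper : ∀ k : ℤ, x (k + N) = x k) {K : ℤ} (hsym : ∀ j : ℤ, x (K + j) = x (K - j)) (j : ℤ) :
    hilbertT N x (K + j) = -hilbertT N x (K - j) := by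
  rw [hilbertT_eq_sum_hilbertMultiplier, hilbertT_eq_sum_hilbertMultiplier,
    ← sum_range_sub_mod, ← mul_neg, ← sum_neg_distrib]
  congr 1
  refine sum_congr rfl fun n hn => ?_
  have hmod := natCast_sub_mod_modEq_neg (mem_range.mp hn)
  have hphase : ww N ^ (2 * K * n) * ww N ^ ((K + j) * -n) = ww N ^ ((K - j) * n) := by
    rw [← zpow_add₀ (ww_ne_zero N)]
    ring_nf
  rw [hilbertMultiplier_sub_mod hN, dft_eq_of_modEq N x hmod, dft_neg_of_symm hper hsym,
    ww_zpow_eq_of_modEq (hmod.mul_left _)]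
  linear_combination (-hilbertMultiplier N n * dft N x n) * hphase

theorem hilbert_antisymmetric_general (N : ℕ) (hNe : Even N) (x : ℤ → ℂ)
    (hper : ∀ k : ℤ, x (k + N) = x k)
    (K : ℤ) (hsym : ∀ j : ℤ, x (K + j) = x (K - j)) :
    (∀ j : ℤ, hilbertT N x (K + j) = -hilbertT N x (K - j)) ∧ hilbertT N x K = 0 := by
  refine ⟨hilbertT_add_eq_neg_sub hNe hper hsym, ?_⟩
  have hcentre := hilbertT_add_eq_neg_sub hNe hper hsym 0
  rw [add_zero, sub_zero] at hcentre
  exact self_eq_neg.mp hcentre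

/-- If a real-valued N-periodic signal x is symmetric about K, then its
    discrete periodic Hilbert transform is antisymmetric about K, and H(x)[K] = 0. -/
theorem hilbert_antisymmetric (N : ℕ) (hN : 0 < N) (hNe : Even N) (x : ℤ → ℂ)
    (hper : ∀ k : ℤ, x (k + N) = x k) (hreal : ∀ k : ℤ, (x k).im = 0)
    (K : ℤ) (hsym : ∀ j : ℤ, x (K + j) = x (K - j)) :
    (∀ j : ℤ, hilbertT N x (K + j) = -hilbertT N x (K - j)) ∧ hilbertT N x K = 0 :=
  hilbert_antisymmetric_general N hNe x hper K hsym

end WP
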